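/- arXiv:1009.2316 — 2 statements merged into one kernel-verified Lean document; each statement's English description precedes it below -/
import Mathlib

section
/- Let n be a positive even integer and let v_0,…,v_{n+1} ∈ ℝⁿ be hereditarily spanning. Then the coboundary of pcoc vanishes at this tuple: ∑_{i=0}^{n+1} (−1)^i pcoc(v_0,…,v̂_i,…,v_{n+1}) = 0. -/
noncomputable section

/-- Sign of the determinant of the matrix whose columns are `v 0, …, v (n-1)`
(zero if they do not form a basis). -/
def oriV {n : ℕ} (v : Fin n → (Fin n → ℝ)) : ℝ :=
  Real.sign (Matrix.det (Matrix.of fun i j => v j i))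

/-- `pcoc(v_0,…,v_n) = ∏_{i=0}^{n} ori(v_0,…,v̂_i,…,v_n)`. -/
def pcoc {n : ℕ} (v : Fin (n + 1) → (Fin n → ℝ)) : ℝ :=
  ∏ i : Fin (n + 1), oriV (v ∘ i.succAbove)

/-- A `k`-tuple of vectors of `ℝⁿ` is hereditarily spanning if every subcollection of `n`
of its entries spans `ℝⁿ`. -/
def HerSpan {n k : ℕ} (v : Fin k → (Fin n → ℝ)) : Prop :=
  ∀ s : Finset (Fin k), s.card = n → Submodule.span ℝ (v '' ↑s) = ⊤

/-
The linear relations among `v 0, …, v (n+1)` form a plane. The signed complementary minors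
`Ω i k = ± det (v with v i and v k omitted)` form an antisymmetric matrix whose rows are such
relations (Cramer's rule), and a relation vanishing at two indices is zero. The three-term Plücker
relation then writes `Ω i k = x i * y k - x k * y i` for points `(x i, y i)` of `ℝ²` (a Gale
dual configuration). Up to a global sign, `(-1)^i * pcoc (v ∘ i.succAbove)` is
`∏ k ≠ i, sign (x i * y k - x k * y i)`; after moving every point into a fixed half-plane and
sorting by slope this product is `± (-1)^(rank of i)`, and the alternating sum over the `n + 2`
ranks vanishes because `n + 2` is even.
-/

open Finset

namespace Real

theorem sign_eq_coe_sign (r : ℝ) : Real.sign r = (SignType.sign r : ℝ) := by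
  rcases lt_trichotomy r 0 with h | rfl | h
  · simp [Real.sign_of_neg h, h]
  · simp [Real.sign_zero]
  · simp [Real.sign_of_pos h, h]

theorem sign_mul (a b : ℝ) : Real.sign (a * b) = Real.sign a * Real.sign b := by
  simp only [sign_eq_coe_sign, _root_.sign_mul, SignType.coe_mul]

theorem sign_neg_one_pow_mul (m : ℕ) (a : ℝ) :
    Real.sign ((-1) ^ m * a) = (-1) ^ m * Real.sign a := by
  simp [sign_eq_coe_sign, _root_.sign_mul, sign_pow]

end Real

theorem oriV_eq_sign_det {n : ℕ} (u : Fin n → Fin n → ℝ) :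
    oriV u = Real.sign (Matrix.of u).det := by
  rw [oriV, ← Matrix.det_transpose]
  rfl

theorem Fin.prod_succAbove_eq_prod_erase {M : Type*} [CommMonoid M] {n : ℕ}
    (f : Fin (n + 1) → M) (i : Fin (n + 1)) :
    ∏ j : Fin n, f (i.succAbove j) = ∏ k ∈ univ.erase i, f k := by
  rw [Fin.univ_succAbove n i, erase_cons, prod_map]
  rfl

theorem sum_neg_one_pow_mul_det_succAbove_smul {R : Type*} [CommRing R] {n : ℕ}
    (u : Fin (n + 1) → Fin n → R) :
    ∑ j : Fin (n + 1), ((-1) ^ (j : ℕ) * (Matrix.of (u ∘ j.succAbove)).det) • u j = 0 := by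
  funext r
  let B : Matrix (Fin (n + 1)) (Fin (n + 1)) R := Matrix.of fun j => Fin.cons (u j r) (u j)
  have hB : B.det = 0 := Matrix.det_zero_of_column_eq (Fin.succ_ne_zero r).symm fun j => rfl
  rw [Matrix.det_succ_column_zero] at hB
  simpa [B, Matrix.submatrix, mul_right_comm, Function.comp_def] using hB

theorem HerSpan.linearIndependent_comp {n k : ℕ} {v : Fin k → Fin n → ℝ} (hv : HerSpan v)
    {f : Fin n → Fin k} (hf : Function.Injective f) : LinearIndependent ℝ (v ∘ f) := by
  refine linearIndependent_of_top_le_span_of_card_eq_finrank ?_ (by simp)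
  have := hv (univ.map ⟨f, hf⟩) (by simp)
  rw [coe_map, Function.Embedding.coeFn_mk, coe_univ, Set.image_univ, ← Set.range_comp] at this
  exact this.ge

theorem HerSpan.det_comp_ne_zero {n k : ℕ} {v : Fin k → Fin n → ℝ} (hv : HerSpan v)
    {f : Fin n → Fin k} (hf : Function.Injective f) : (Matrix.of (v ∘ f)).det ≠ 0 :=
  ((Matrix.isUnit_iff_isUnit_det _).1
    (Matrix.linearIndependent_rows_iff_isUnit.1 (hv.linearIndependent_comp hf))).ne_zero

section SignedCominor

variable {n : ℕ} (v : Fin (n + 2) → Fin n → ℝ)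

def signedCominor (i : Fin (n + 2)) : Fin (n + 2) → ℝ :=
  i.insertNth 0 fun j => (-1) ^ (i + j : ℕ) * (Matrix.of (v ∘ i.succAbove ∘ j.succAbove)).det

@[simp]
theorem signedCominor_self (i : Fin (n + 2)) : signedCominor v i i = 0 :=
  Fin.insertNth_apply_same _ _ _

theorem signedCominor_succAbove (i : Fin (n + 2)) (j : Fin (n + 1)) :
    signedCominor v i (i.succAbove j) =
      (-1) ^ (i + j : ℕ) * (Matrix.of (v ∘ i.succAbove ∘ j.succAbove)).det :=
  Fin.insertNth_apply_succAbove _ _ _ _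

theorem signedCominor_antisymm (i k : Fin (n + 2)) :
    signedCominor v k i = -signedCominor v i k := by
  rcases eq_or_ne k i with rfl | hki
  · simp
  obtain ⟨j, rfl⟩ := Fin.exists_succAbove_eq hki
  have hi : (i.succAbove j).succAbove (j.predAbove i) = i := Fin.succAbove_succAbove_predAbove i j
  rw [← congrArg (signedCominor v (i.succAbove j)) hi, signedCominor_succAbove,
    signedCominor_succAbove, Fin.neg_one_pow_succAbove_add_predAbove, neg_mul]
  congr 3
  funext l
  exact congrArg v (Fin.succAbove_succAbove_succAbove_predAbove i j l)

theorem sum_signedCominor_smul (i : Fin (n + 2)) : ∑ k, signedCominor v i k • v k = 0 := by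
  rw [Fin.sum_univ_succAbove _ i, signedCominor_self, zero_smul, zero_add]
  have h := congrArg ((-1 : ℝ) ^ (i : ℕ) • ·)
    (sum_neg_one_pow_mul_det_succAbove_smul (v ∘ i.succAbove))
  simpa [signedCominor_succAbove, smul_sum, smul_smul, pow_add, mul_assoc, Function.comp_assoc]
    using h

variable {v}

theorem signedCominor_ne_zero (hv : HerSpan v) {i k : Fin (n + 2)} (hik : i ≠ k) :
    signedCominor v i k ≠ 0 := by
  obtain ⟨j, rfl⟩ := Fin.exists_succAbove_eq hik.symm
  rw [signedCominor_succAbove]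
  exact mul_ne_zero (pow_ne_zero _ (by norm_num)) (hv.det_comp_ne_zero
    (Fin.succAbove_right_injective.comp Fin.succAbove_right_injective))

theorem HerSpan.eq_zero_of_sum_smul_eq_zero (hv : HerSpan v) {z : Fin (n + 2) → ℝ}
    (hz : ∑ k, z k • v k = 0) {i k : Fin (n + 2)} (hik : i ≠ k) (hi : z i = 0)
    (hk : z k = 0) :
    z = 0 := by
  obtain ⟨j, rfl⟩ := Fin.exists_succAbove_eq hik.symm
  have hrest : ∑ l, z (i.succAbove (j.succAbove l)) • v (i.succAbove (j.succAbove l)) = 0 := by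
    rwa [Fin.sum_univ_succAbove _ i, Fin.sum_univ_succAbove _ j, hi, hk, zero_smul, zero_smul,
      zero_add, zero_add] at hz
  have h := Fintype.linearIndependent_iff.1 (hv.linearIndependent_comp
    (Fin.succAbove_right_injective.comp Fin.succAbove_right_injective)) _ hrest
  funext m
  induction m using Fin.succAboveCases i with
  | x => exact hi
  | p m => induction m using Fin.succAboveCases j with
    | x => exact hk
    | p l => exact h l

end SignedCominor

theorem exists_eq_wedge_of_antisymm {ι : Type*} (K : Submodule ℝ (ι → ℝ))
    (Ω : ι → ι → ℝ) (hΩK : ∀ i, Ω i ∈ K) (hanti : ∀ i k, Ω k i = -Ω i k)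
    {a b : ι} (hK : ∀ z ∈ K, z a = 0 → z b = 0 → z = 0) (hab : Ω a b ≠ 0) :
    ∃ x y : ι → ℝ, ∀ i k, Ω i k = x i * y k - x k * y i := by
  have hdiag : ∀ i, Ω i i = 0 := fun i => by linarith [hanti i i]
  refine ⟨fun i => Ω a i / Ω a b, Ω b, fun i k => ?_⟩
  have hw := hK (Ω b i • Ω a - Ω a i • Ω b - Ω b a • Ω i)
    (K.sub_mem (K.sub_mem (K.smul_mem _ (hΩK a)) (K.smul_mem _ (hΩK b))) (K.smul_mem _ (hΩK i)))
    (by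
      simp only [Pi.sub_apply, Pi.smul_apply, smul_eq_mul]
      linear_combination Ω b i * hdiag a - Ω b a * hanti i a)
    (by
      simp only [Pi.sub_apply, Pi.smul_apply, smul_eq_mul]
      linear_combination -Ω a i * hdiag b - Ω b a * hanti i b + Ω b i * hanti a b)
  have hk := congrFun hw k
  simp only [Pi.sub_apply, Pi.smul_apply, smul_eq_mul, Pi.zero_apply] at hk
  field_simp
  linear_combination hk + Ω i k * hanti a b

/-- `projSlope` linearly orders the lines through the origin, and `halfPlaneSign p` is the sign
that moves `p ≠ 0` into the half-plane `{x > 0} ∪ {x = 0, y > 0}`. -/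
def projSlope (p : ℝ × ℝ) : WithTop ℝ :=
  if p.1 = 0 then ⊤ else ((p.2 / p.1 : ℝ) : WithTop ℝ)

def halfPlaneSign (p : ℝ × ℝ) : ℝ := if p.1 < 0 ∨ p.1 = 0 ∧ p.2 < 0 then -1 else 1

theorem halfPlaneSign_mul_self (p : ℝ × ℝ) : halfPlaneSign p * halfPlaneSign p = 1 := by
  unfold halfPlaneSign; split_ifs <;> norm_num

theorem halfPlaneSign_of_fst_ne_zero {p : ℝ × ℝ} (h : p.1 ≠ 0) :
    halfPlaneSign p = Real.sign p.1 := by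
  rcases h.lt_or_gt with h | h
  · simp [halfPlaneSign, h, Real.sign_of_neg h]
  · simp [halfPlaneSign, h.not_gt, h.ne', Real.sign_of_pos h]

theorem halfPlaneSign_of_fst_eq_zero {p : ℝ × ℝ} (h : p.1 = 0) (h2 : p.2 ≠ 0) :
    halfPlaneSign p = Real.sign p.2 := by
  rcases h2.lt_or_gt with h2 | h2
  · simp [halfPlaneSign, h, h2, Real.sign_of_neg h2]
  · simp [halfPlaneSign, h, h2.not_gt, Real.sign_of_pos h2]

theorem projSlope_ne_of_wedge_ne_zero {p q : ℝ × ℝ} (hpq : p.1 * q.2 - q.1 * p.2 ≠ 0) :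
    projSlope p ≠ projSlope q := by
  unfold projSlope
  split_ifs with hp hq hq
  · simp_all
  · simp
  · simp
  · rw [Ne, WithTop.coe_eq_coe, div_eq_div_iff hp hq]
    contrapose! hpq
    linear_combination -hpq

theorem sign_wedge_eq {p q : ℝ × ℝ} (hpq : p.1 * q.2 - q.1 * p.2 ≠ 0) :
    Real.sign (p.1 * q.2 - q.1 * p.2) =
      halfPlaneSign p * halfPlaneSign q * if projSlope q < projSlope p then -1 else 1 := by
  by_cases hp : p.1 = 0 <;> by_cases hq : q.1 = 0
  · simp [hp, hq] at hpq
  · have hp2 : p.2 ≠ 0 := by rintro h; simp [hp, h] at hpq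
    rw [halfPlaneSign_of_fst_eq_zero hp hp2, halfPlaneSign_of_fst_ne_zero hq,
      if_pos (by simp [projSlope, hp, hq]), hp, zero_mul, zero_sub, Real.sign_neg, Real.sign_mul]
    ring
  · have hq2 : q.2 ≠ 0 := by rintro h; simp [hq, h] at hpq
    rw [halfPlaneSign_of_fst_ne_zero hp, halfPlaneSign_of_fst_eq_zero hq hq2,
      if_neg (by simp [projSlope, hp, hq]), hq, zero_mul, sub_zero, Real.sign_mul, mul_one]
  · have hwedge : p.1 * q.2 - q.1 * p.2 = p.1 * q.1 * (q.2 / q.1 - p.2 / p.1) := by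
      field_simp
    have hne : q.2 / q.1 - p.2 / p.1 ≠ 0 := by
      rw [hwedge] at hpq; exact right_ne_zero_of_mul hpq
    rw [halfPlaneSign_of_fst_ne_zero hp, halfPlaneSign_of_fst_ne_zero hq, hwedge, Real.sign_mul,
      Real.sign_mul]
    simp only [projSlope, hp, hq, if_false, WithTop.coe_lt_coe]
    split_ifs with hlt
    · rw [Real.sign_of_neg (sub_neg.2 hlt)]
    · rw [Real.sign_of_pos (sub_pos.2 (lt_of_le_of_ne (not_lt.1 hlt) (sub_ne_zero.1 hne).symm))]

theorem sum_neg_one_pow_card_lt_eq_zero {ι α : Type*} [Fintype ι] [LinearOrder α]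
    {s : ι → α} (hs : Function.Injective s) (hι : Even (Fintype.card ι)) :
    ∑ i, (-1 : ℝ) ^ #{k | s k < s i} = 0 := by
  have hlt : ∀ i, #{k | s k < s i} < Fintype.card ι := fun i =>
    card_lt_card (filter_ssubset.2 ⟨i, mem_univ _, lt_irrefl _⟩)
  have hmono : ∀ i j, s i < s j → #{k | s k < s i} < #{k | s k < s j} := fun i j hij =>
    card_lt_card ⟨fun k hk => mem_filter.2 ⟨mem_univ k, (mem_filter.1 hk).2.trans hij⟩,
      fun h => lt_irrefl _ (mem_filter.1 (h (mem_filter.2 ⟨mem_univ i, hij⟩))).2⟩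
  let rank : ι → Fin (Fintype.card ι) := fun i => ⟨_, hlt i⟩
  have hrank : Function.Bijective rank := by
    refine (Fintype.bijective_iff_injective_and_card _).2 ⟨fun i j hij => ?_, by simp⟩
    by_contra hne
    rcases (hs.ne hne).lt_or_gt with h | h
    · exact (hmono i j h).ne (Fin.val_eq_of_eq hij)
    · exact (hmono j i h).ne (Fin.val_eq_of_eq hij).symm
  rw [Fintype.sum_bijective rank hrank _ (fun r => (-1 : ℝ) ^ (r : ℕ)) fun _ => rfl,
    Fin.sum_univ_eq_sum_range (fun r => (-1 : ℝ) ^ r), neg_one_geom_sum, if_pos hι]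

theorem sum_prod_sign_wedge_eq_zero {ι : Type*} [Fintype ι] [DecidableEq ι]
    (hι : Even (Fintype.card ι)) (p : ι → ℝ × ℝ)
    (hp : ∀ i k, i ≠ k → (p i).1 * (p k).2 - (p k).1 * (p i).2 ≠ 0) :
    ∑ i, ∏ k ∈ univ.erase i, Real.sign ((p i).1 * (p k).2 - (p k).1 * (p i).2) = 0 := by
  let c i := halfPlaneSign (p i)
  let s i := projSlope (p i)
  have hs : Function.Injective s := fun i k h => by
    by_contra hne
    exact projSlope_ne_of_wedge_ne_zero (hp i k hne) h
  have hprod : ∀ i, ∏ k ∈ univ.erase i, Real.sign ((p i).1 * (p k).2 - (p k).1 * (p i).2) =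
      (∏ k, c k) * (-1) ^ #{k | s k < s i} := fun i => by
    obtain ⟨r, hr⟩ := hι
    calc ∏ k ∈ univ.erase i, Real.sign ((p i).1 * (p k).2 - (p k).1 * (p i).2)
        = ∏ k ∈ univ.erase i, c i * c k * if s k < s i then -1 else 1 :=
          prod_congr rfl fun k hk => sign_wedge_eq (hp i k (ne_of_mem_erase hk).symm)
      _ = ∏ k, c i * c k * if s k < s i then -1 else 1 :=
          prod_erase _ (by rw [if_neg (lt_irrefl _), mul_one, halfPlaneSign_mul_self])
      _ = (∏ k, c k) * (-1) ^ #{k | s k < s i} := by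
          rw [prod_mul_distrib, prod_mul_distrib, prod_const, card_univ, hr, pow_add, ← mul_pow,
            halfPlaneSign_mul_self, one_pow, one_mul, prod_ite, prod_const, prod_const_one,
            mul_one]
  rw [sum_congr rfl fun i _ => hprod i, ← mul_sum, sum_neg_one_pow_card_lt_eq_zero hs hι,
    mul_zero]

theorem neg_one_pow_mul_pcoc {n : ℕ} (hn : Even n) (v : Fin (n + 2) → Fin n → ℝ)
    (i : Fin (n + 2)) :
    (-1) ^ (i : ℕ) * pcoc (v ∘ i.succAbove) =
      (∏ j : Fin (n + 1), (-1) ^ (j : ℕ)) *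
        ∏ j : Fin (n + 1), Real.sign (signedCominor v i (i.succAbove j)) := by
  have hori : ∀ j : Fin (n + 1), oriV ((v ∘ i.succAbove) ∘ j.succAbove) =
      (-1) ^ (i : ℕ) * ((-1) ^ (j : ℕ) * Real.sign (signedCominor v i (i.succAbove j))) := by
    intro j
    rw [signedCominor_succAbove, Real.sign_neg_one_pow_mul, oriV_eq_sign_det, ← mul_assoc,
      ← mul_assoc, ← pow_add, ← pow_add, ← two_mul, pow_mul, neg_one_sq, one_pow, one_mul]
    rfl
  have hsign : (-1 : ℝ) ^ (n + 1 + 1) = 1 := (hn.add even_two).neg_one_pow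
  rw [pcoc, prod_congr rfl fun j _ => hori j, prod_mul_distrib, prod_const, card_univ,
    Fintype.card_fin, prod_mul_distrib, ← mul_assoc, ← pow_succ', pow_right_comm,
    hsign, one_pow, one_mul]

theorem stmt6_general (n : ℕ) (he : Even n)
    (v : Fin (n + 2) → (Fin n → ℝ)) (hv : HerSpan v) :
    ∑ i : Fin (n + 2), (-1 : ℝ) ^ (i : ℕ) * pcoc (v ∘ i.succAbove) = 0 := by
  obtain ⟨x, y, hxy⟩ := exists_eq_wedge_of_antisymm
    (LinearMap.ker (Fintype.linearCombination ℝ v)) (signedCominor v)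
    (fun i => sum_signedCominor_smul v i) (signedCominor_antisymm v)
    (a := 0) (b := 1)
    (fun z hz h0 h1 => hv.eq_zero_of_sum_smul_eq_zero hz (by simp) h0 h1)
    (signedCominor_ne_zero hv (by simp))
  have hterm : ∀ i : Fin (n + 2), (-1) ^ (i : ℕ) * pcoc (v ∘ i.succAbove) =
      (∏ j : Fin (n + 1), (-1) ^ (j : ℕ)) *
        ∏ k ∈ univ.erase i, Real.sign (x i * y k - x k * y i) := fun i => by
    rw [neg_one_pow_mul_pcoc he, Fin.prod_succAbove_eq_prod_erase
      (fun k => Real.sign (signedCominor v i k)) i]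
    simp only [hxy]
  rw [sum_congr rfl fun i _ => hterm i, ← mul_sum,
    sum_prod_sign_wedge_eq_zero (by simpa using he.add even_two) (fun i => (x i, y i))
      fun i k hik => hxy i k ▸ signedCominor_ne_zero hv hik, mul_zero]

/-- the coboundary of `pcoc` vanishes on hereditarily spanning
`(n+2)`-tuples: `∑_{i=0}^{n+1} (−1)^i pcoc(v_0,…,v̂_i,…,v_{n+1}) = 0`. -/
theorem stmt6 (n : ℕ) (hn : 0 < n) (he : Even n)
    (v : Fin (n + 2) → (Fin n → ℝ)) (hv : HerSpan v) :
    ∑ i : Fin (n + 2), (-1 : ℝ) ^ (i : ℕ) * pcoc (v ∘ i.succAbove) = 0 :=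
  stmt6_general n he v hv

end
end

section
/- Let n be a positive even integer, g ∈ GL_n(ℝ), and F_1,…,F_k complete oriented flags in ℝⁿ (1 ≤ k ≤ n). Then [gF_1,…,gF_k] = g[F_1,…,F_k] as oriented subspaces, and for k = n, ori(g[F_1,…,F_n]) = ε(g)·ori([F_1,…,F_n]) where ε(g) is the sign of det g. Consequently coco(gF_0,…,gF_n) = ε(g)·coco(F_0,…,F_n) for all complete oriented flags F_0,…,F_n. -/
/-!
An invertible linear map preserves spans and non-membership in spans, so it carries the first
flag vector outside `span W` to the first vector of the image flag outside `span (g W)`; hence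
the bracket construction commutes with `g`. Orientations of images pick up the sign of `det g`,
and `coco` is a product of `n + 1` orientations, with `ε(g) ^ (n + 1) = ε(g)` for even `n`.
-/

open Matrix

noncomputable section

open Classical in
/-- We represent a complete oriented flag `F` in `ℝⁿ` by a basis `(F 0, …, F (n-1))`:
the flag is `Fⁱ = span(F 0, …, F (i-1))`, oriented by this basis, with the positive
half-space `(Fⁱ)⁺` the one containing `F (i-1)`.  Two bases represent the same
oriented flag iff the transition matrix is upper triangular with positive diagonal.

Given a tuple `W` representing an oriented subspace `⟨W 0, …, W (k-1)⟩` and a flag `F`,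
`extVec W F` is the first vector `F d` of the flag not contained in `span W`; it is a
vector of the positive half-space `(F^{d+1})⁺`, so `snoc W (extVec W F)` represents the
oriented subspace `[⟨W⟩, F]` of Bucher–Monod. -/
def extVec {n k : ℕ} (W : Fin k → (Fin n → ℝ)) (F : Fin n → (Fin n → ℝ)) : Fin n → ℝ :=
  if h : ∃ j, F j ∉ Submodule.span ℝ (Set.range W) then
    F (Fin.find (fun j => F j ∉ Submodule.span ℝ (Set.range W)) h)
  else 0

/-- `bracket (F_1, …, F_k)` is (the canonical representing tuple of) the oriented
`k`-dimensional subspace `[F_1, …, F_k]`, defined inductively by `[F_1] = F_1¹` and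
`[F_1,…,F_k] = [[F_1,…,F_{k-1}], F_k]`. -/
def bracket {n : ℕ} : {k : ℕ} → (Fin k → (Fin n → (Fin n → ℝ))) → (Fin k → (Fin n → ℝ))
  | 0, _ => Fin.elim0
  | (_ + 1), Fs =>
      Fin.snoc (bracket (Fs ∘ Fin.castSucc))
        (extVec (bracket (Fs ∘ Fin.castSucc)) (Fs (Fin.last _)))

/-- `coco(F_0,…,F_n) = ∏_{i=0}^{n} ori([F_0,…,F̂_i,…,F_n])`. -/
def coco {n : ℕ} (Fs : Fin (n + 1) → (Fin n → (Fin n → ℝ))) : ℝ :=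
  ∏ i : Fin (n + 1), oriV (bracket (Fs ∘ i.succAbove))


/-- Sign of the determinant of `g`. -/
def eps {n : ℕ} (g : GL (Fin n) ℝ) : ℝ :=
  Real.sign ((g : Matrix (Fin n) (Fin n) ℝ).det)

theorem Real.sign_mul_s8 (a b : ℝ) : Real.sign (a * b) = Real.sign a * Real.sign b := by
  rcases lt_trichotomy a 0 with ha | ha | ha <;> rcases lt_trichotomy b 0 with hb | hb | hb <;>
    simp [ha, hb, Real.sign_of_pos, Real.sign_of_neg, mul_pos_of_neg_of_neg,
      mul_neg_of_pos_of_neg, mul_neg_of_neg_of_pos]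

section InjectiveMap

variable {n : ℕ} {f : (Fin n → ℝ) →ₗ[ℝ] (Fin n → ℝ)}

theorem extVec_map (hf : Function.Injective f) {k : ℕ} (W : Fin k → Fin n → ℝ)
    (F : Fin n → Fin n → ℝ) : extVec (f ∘ W) (f ∘ F) = f (extVec W F) := by
  classical
  have hmem (x : Fin n → ℝ) :
      f x ∈ Submodule.span ℝ (Set.range (f ∘ W)) ↔ x ∈ Submodule.span ℝ (Set.range W) := by
    rw [Set.range_comp]
    exact Submodule.apply_mem_span_image_iff_mem_span hf
  have hex : (∃ j, f (F j) ∉ Submodule.span ℝ (Set.range (f ∘ W))) ↔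
      ∃ j, F j ∉ Submodule.span ℝ (Set.range W) :=
    exists_congr fun j => not_congr (hmem (F j))
  unfold extVec
  split_ifs with himage hsource hsource
  · exact congrArg (f ∘ F) (Fin.find_congr' (not_congr (hmem _)))
  · exact absurd (hex.1 himage) hsource
  · exact absurd (hex.2 hsource) himage
  · exact (map_zero f).symm

theorem bracket_map (hf : Function.Injective f) :
    ∀ {k : ℕ} (Fs : Fin k → Fin n → Fin n → ℝ),
      bracket (fun i => f ∘ Fs i) = f ∘ bracket Fs
  | 0, _ => funext fun i => i.elim0
  | k + 1, Fs => by
      have ih : bracket ((fun i => f ∘ Fs i) ∘ Fin.castSucc) = f ∘ bracket (Fs ∘ Fin.castSucc) :=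
        bracket_map hf (Fs ∘ Fin.castSucc)
      rw [bracket, bracket, ih, extVec_map hf, Fin.comp_snoc]

end InjectiveMap

theorem bracket_mulVec {n k : ℕ} (g : GL (Fin n) ℝ) (Fs : Fin k → Fin n → Fin n → ℝ) :
    bracket (fun i j => (g : Matrix (Fin n) (Fin n) ℝ) *ᵥ Fs i j) =
      fun i => (g : Matrix (Fin n) (Fin n) ℝ) *ᵥ bracket Fs i :=
  bracket_map (f := Matrix.mulVecLin (g : Matrix (Fin n) (Fin n) ℝ))
    (Matrix.mulVec_injective_iff_isUnit.mpr g.isUnit) Fs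

theorem oriV_mulVec {n : ℕ} (A : Matrix (Fin n) (Fin n) ℝ) (v : Fin n → Fin n → ℝ) :
    oriV (fun i => A *ᵥ v i) = Real.sign A.det * oriV v := by
  have hcols : (Matrix.of fun i j => (A *ᵥ v j) i) = A * Matrix.of fun i j => v j i := by
    ext i j
    simp [Matrix.mul_apply, Matrix.mulVec, dotProduct]
  rw [oriV, oriV, hcols, Matrix.det_mul, Real.sign_mul_s8]

theorem coco_mulVec {n : ℕ} (g : GL (Fin n) ℝ) (Fs : Fin (n + 1) → Fin n → Fin n → ℝ) :
    coco (fun i j => (g : Matrix (Fin n) (Fin n) ℝ) *ᵥ Fs i j) = eps g ^ (n + 1) * coco Fs := by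
  have hface (i : Fin (n + 1)) :
      oriV (bracket ((fun i j => (g : Matrix (Fin n) (Fin n) ℝ) *ᵥ Fs i j) ∘ i.succAbove)) =
        eps g * oriV (bracket (Fs ∘ i.succAbove)) :=
    (congrArg oriV (bracket_mulVec g (Fs ∘ i.succAbove))).trans (oriV_mulVec _ _)
  simp only [coco, hface, Finset.prod_mul_distrib, Finset.prod_const, Finset.card_univ,
    Fintype.card_fin]

theorem eps_sq {n : ℕ} (g : GL (Fin n) ℝ) : eps g ^ 2 = 1 := by
  rcases Real.sign_apply_eq_of_ne_zero _ (Matrix.GeneralLinearGroup.det_ne_zero g) with h | h <;>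
    simp [eps, h]

theorem eps_pow_succ_of_even {n : ℕ} (he : Even n) (g : GL (Fin n) ℝ) :
    eps g ^ (n + 1) = eps g := by
  obtain ⟨m, rfl⟩ := he
  rw [pow_succ, pow_add, ← mul_pow, ← sq, eps_sq, one_pow, one_mul]

theorem stmt8_general (n : ℕ) (he : Even n) (g : GL (Fin n) ℝ) :
    (∀ (k : ℕ), 1 ≤ k → k ≤ n → ∀ Fs : Fin k → (Fin n → (Fin n → ℝ)),
      (∀ i, LinearIndependent ℝ (Fs i)) →
      bracket (fun i j => (g : Matrix (Fin n) (Fin n) ℝ) *ᵥ Fs i j) =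
        fun i => (g : Matrix (Fin n) (Fin n) ℝ) *ᵥ bracket Fs i) ∧
    (∀ Fs : Fin n → (Fin n → (Fin n → ℝ)), (∀ i, LinearIndependent ℝ (Fs i)) →
      oriV (fun i => (g : Matrix (Fin n) (Fin n) ℝ) *ᵥ bracket Fs i) =
        eps g * oriV (bracket Fs)) ∧
    (∀ Fs : Fin (n + 1) → (Fin n → (Fin n → ℝ)), (∀ i, LinearIndependent ℝ (Fs i)) →
      coco (fun i j => (g : Matrix (Fin n) (Fin n) ℝ) *ᵥ Fs i j) = eps g * coco Fs) :=
  ⟨fun _ _ _ Fs _ => bracket_mulVec g Fs,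
    fun Fs _ => oriV_mulVec _ (bracket Fs),
    fun Fs _ => by rw [coco_mulVec, eps_pow_succ_of_even he]⟩

/-- for `g ∈ GL_n(ℝ)` and complete oriented flags (represented by bases,
the group acting by `g·v = g *ᵥ v` on representing vectors):
`[gF_1,…,gF_k] = g[F_1,…,F_k]` as oriented subspaces (`1 ≤ k ≤ n`);
`ori(g[F_1,…,F_n]) = ε(g)·ori([F_1,…,F_n])`; and consequently
`coco(gF_0,…,gF_n) = ε(g)·coco(F_0,…,F_n)`. -/
theorem stmt8 (n : ℕ) (hn : 0 < n) (he : Even n) (g : GL (Fin n) ℝ) :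
    (∀ (k : ℕ), 1 ≤ k → k ≤ n → ∀ Fs : Fin k → (Fin n → (Fin n → ℝ)),
      (∀ i, LinearIndependent ℝ (Fs i)) →
      bracket (fun i j => (g : Matrix (Fin n) (Fin n) ℝ) *ᵥ Fs i j) =
        fun i => (g : Matrix (Fin n) (Fin n) ℝ) *ᵥ bracket Fs i) ∧
    (∀ Fs : Fin n → (Fin n → (Fin n → ℝ)), (∀ i, LinearIndependent ℝ (Fs i)) →
      oriV (fun i => (g : Matrix (Fin n) (Fin n) ℝ) *ᵥ bracket Fs i) =
        eps g * oriV (bracket Fs)) ∧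
    (∀ Fs : Fin (n + 1) → (Fin n → (Fin n → ℝ)), (∀ i, LinearIndependent ℝ (Fs i)) →
      coco (fun i j => (g : Matrix (Fin n) (Fin n) ℝ) *ᵥ Fs i j) = eps g * coco Fs) :=
  stmt8_general n he g

end
end
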